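/- Let V', V be finite-dimensional k-vector spaces with dim V = n ≤ dim V' = n'. Let w, w' : V' → V be two surjective linear maps such that Λⁿw = Λⁿw' as maps ΛⁿV' → ΛⁿV. Then there exists a unique g ∈ SL(V) (invertible with det g = 1) such that w' = g ∘ w. -/

import Mathlib

/-!
Pick `v` with `w ∘ v = b` for a basis `b` of `V`, and let `g` send `b` to `w' ∘ v`. Pairing
`Λⁿw = Λⁿw'` with the determinant form `det_b` gives `det g = det_b (w' ∘ v) = det_b (w ∘ v) = 1`,
so `g` is invertible and `g⁻¹ ∘ w'` again maps `v` to `b`. By Cramer's rule the `i`-th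
`b`-coordinate of `w x` is `det_b` of `w` applied to `v` with its `i`-th entry replaced by `x`;
as `det_b ∘ w = det_b ∘ (g⁻¹ ∘ w')`, this gives `w = g⁻¹ ∘ w'`. Uniqueness holds because `w` is
surjective.
-/

open ExteriorAlgebra in
theorem extMap_mem {R M N : Type*} [CommRing R] [AddCommGroup M] [Module R M]
    [AddCommGroup N] [Module R N] (n : ℕ) (f : M →ₗ[R] N) :
    ∀ x ∈ ⋀[R]^n M, (ExteriorAlgebra.map f).toLinearMap x ∈ ⋀[R]^n N := by
  intro x hx
  have h : Submodule.map (ExteriorAlgebra.map f).toLinearMap (⋀[R]^n M) ≤ ⋀[R]^n N := by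
    rw [exteriorPower, exteriorPower, Submodule.map_pow, ι_range_map_map]
    exact pow_le_pow_left' LinearMap.map_le_range n
  exact h ⟨x, hx, rfl⟩

/-- The `n`-th exterior power `Λⁿf : ΛⁿM → ΛⁿN` of a linear map `f : M → N`. -/
noncomputable def extMap {R M N : Type*} [CommRing R] [AddCommGroup M] [Module R M]
    [AddCommGroup N] [Module R N] (n : ℕ) (f : M →ₗ[R] N) :
    ⋀[R]^n M →ₗ[R] ⋀[R]^n N :=
  (ExteriorAlgebra.map f).toLinearMap.restrict (extMap_mem n f)

open Function Module

section ExteriorPower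

variable {R M N P : Type*} [CommRing R] [AddCommGroup M] [Module R M]
  [AddCommGroup N] [Module R N] [AddCommGroup P] [Module R P] {n : ℕ}

theorem extMap_eq_map (f : M →ₗ[R] N) : extMap n f = exteriorPower.map n f := by
  refine exteriorPower.linearMap_ext (AlternatingMap.ext fun m => Subtype.ext ?_)
  simp [extMap, exteriorPower.ιMulti_apply_coe, comp_def]

theorem AlternatingMap.compLinearMap_eq_of_extMap_eq {f f' : M →ₗ[R] N}
    (h : extMap n f = extMap n f') (φ : N [⋀^Fin n]→ₗ[R] P) :
    φ.compLinearMap f = φ.compLinearMap f' := by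
  ext m
  have := congrArg
    (fun F => exteriorPower.alternatingMapLinearEquiv φ (F (exteriorPower.ιMulti R n m))) h
  simpa [extMap_eq_map, comp_def] using this

end ExteriorPower

namespace Module.Basis

variable {R M N ι : Type*} [CommRing R] [AddCommGroup M] [Module R M]
  [AddCommGroup N] [Module R N] [Fintype ι] [DecidableEq ι]

theorem det_update_self (b : Basis ι R M) (i : ι) (x : M) :
    b.det (update b i x) = b.coord i x := by
  have hmk : Basis.mk b.linearIndependent b.span_eq.ge = b :=
    Basis.eq_of_apply_eq fun _ => Basis.mk_apply ..
  simpa [hmk, Basis.det_self] using (LinearMap.congr_fun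
    (b.det_smul_mk_coord_eq_det_update b.linearIndependent b.span_eq.ge i) x).symm

theorem det_compLinearMap_comp (b : Basis ι R M) (f : M →ₗ[R] M) (w : N →ₗ[R] M) :
    b.det.compLinearMap (f ∘ₗ w) = LinearMap.det f • b.det.compLinearMap w := by
  ext m
  exact b.det_comp f (w ∘ m)

theorem eq_of_det_compLinearMap_eq (b : Basis ι R M) {w w' : N →ₗ[R] M} {v : ι → N}
    (hv : w ∘ v = b) (hv' : w' ∘ v = b)
    (h : b.det.compLinearMap w = b.det.compLinearMap w') : w = w' := by
  ext x
  refine b.ext_elem fun i => ?_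
  calc b.repr (w x) i = b.det (w ∘ update v i x) := by rw [comp_update, hv, det_update_self]; rfl
    _ = b.det (w' ∘ update v i x) := congr($h (update v i x))
    _ = b.repr (w' x) i := by rw [comp_update, hv', det_update_self]; rfl

theorem exists_det_eq_one_of_det_compLinearMap_eq (b : Basis ι R M) {w w' : N →ₗ[R] M}
    (hw : Surjective w) (h : b.det.compLinearMap w = b.det.compLinearMap w') :
    ∃ g : M ≃ₗ[R] M, LinearMap.det (g : M →ₗ[R] M) = 1 ∧ w' = g ∘ₗ w := by
  choose v hv using fun i => hw (b i)
  have hwv : w ∘ v = b := funext hv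
  let f : M →ₗ[R] M := b.constr R (w' ∘ v)
  have hfb : f ∘ b = w' ∘ v := funext (b.constr_basis R _)
  have hdet : LinearMap.det f = 1 :=
    calc LinearMap.det f = b.det (f ∘ b) := by rw [b.det_comp, det_self, mul_one]
      _ = b.det (w ∘ v) := by rw [hfb]; exact congr($h v).symm
      _ = 1 := by rw [hwv, det_self]
  let g : M ≃ₗ[R] M := LinearEquiv.ofIsUnitDet (v := b) (v' := b) (f := f)
    (by rw [LinearMap.det_toMatrix, hdet]; exact isUnit_one)
  have hg : LinearMap.det (g : M →ₗ[R] M) = 1 := hdet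
  have hg_symm : LinearMap.det (g.symm : M →ₗ[R] M) = 1 := by
    have := LinearMap.det_comp (g.symm : M →ₗ[R] M) g
    rwa [LinearEquiv.symm_comp, LinearMap.det_id, hg, mul_one, eq_comm] at this
  refine ⟨g, hg, ?_⟩
  have : w = (g.symm : M →ₗ[R] M) ∘ₗ w' := by
    refine b.eq_of_det_compLinearMap_eq hwv ?_ ?_
    · exact funext fun i => g.symm_apply_eq.mpr (congr_fun hfb i).symm
    · rw [det_compLinearMap_comp, hg_symm, one_smul, h]
  rw [this, ← LinearMap.comp_assoc, LinearEquiv.comp_symm, LinearMap.id_comp]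

end Module.Basis

theorem existsUnique_sl_of_top_exteriorPower_eq_general
    (k : Type*) [Field k] (V V' : Type*)
    [AddCommGroup V] [Module k V] [AddCommGroup V'] [Module k V']
    [FiniteDimensional k V]
    (n : ℕ) (hV : Module.finrank k V = n)
    (w w' : V' →ₗ[k] V) (hw : Function.Surjective w)
    (h : extMap n w = extMap n w') :
    ∃! g : V ≃ₗ[k] V,
      LinearMap.det (g : V →ₗ[k] V) = 1 ∧ w' = (g : V →ₗ[k] V) ∘ₗ w := by
  subst hV
  obtain ⟨g, hg⟩ := (finBasis k V).exists_det_eq_one_of_det_compLinearMap_eq hw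
    (AlternatingMap.compLinearMap_eq_of_extMap_eq h _)
  refine ⟨g, hg, fun g' hg' => LinearEquiv.toLinearMap_injective ?_⟩
  exact (LinearMap.cancel_right hw).mp (hg'.2.symm.trans hg.2)

/-- If `w, w' : V' → V` are surjective with `dim V = n ≤ dim V' = n'` and
`Λⁿw = Λⁿw'`, then there is a unique `g ∈ SL(V)` (invertible with `det g = 1`) such that
`w' = g ∘ w`. -/
theorem existsUnique_sl_of_top_exteriorPower_eq
    (k : Type*) [Field k] (V V' : Type*)
    [AddCommGroup V] [Module k V] [AddCommGroup V'] [Module k V']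
    [FiniteDimensional k V] [FiniteDimensional k V']
    (n n' : ℕ) (hV : Module.finrank k V = n) (hV' : Module.finrank k V' = n')
    (hnn' : n ≤ n')
    (w w' : V' →ₗ[k] V) (hw : Function.Surjective w) (hw' : Function.Surjective w')
    (h : extMap n w = extMap n w') :
    ∃! g : V ≃ₗ[k] V,
      LinearMap.det (g : V →ₗ[k] V) = 1 ∧ w' = (g : V →ₗ[k] V) ∘ₗ w :=
  existsUnique_sl_of_top_exteriorPower_eq_general k V V' n hV w w' hw h
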